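/- Strict compositionality of Bayesian inverses with support: in a Markov category C, let f : X → Y, g : Y → Z, and p : I → X be given, with supports (X_p, i_X, r_X) of p, (Y_{f∘p}, i_Y, r_Y) of f ∘ p, and (Z_{g∘f∘p}, i_Z, r_Z) of g ∘ f ∘ p. If f♯ : Y_{f∘p} → X_p is such that i_X ∘ f♯ ∘ r_Y is a Bayesian inverse of f at p, and g♯ : Z_{g∘f∘p} → Y_{f∘p} is such that i_Y ∘ g♯ ∘ r_Z is a Bayesian inverse of g at f ∘ p, then i_X ∘ (f♯ ∘ g♯) ∘ r_Z is a Bayesian inverse of g ∘ f at p; moreover f♯ ∘ g♯ is the unique morphism Z_{g∘f∘p} → X_p with this property. -/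

import Mathlib

open CategoryTheory MonoidalCategory

universe v u

/-- A Markov category: a symmetric monoidal category equipped with a commutative
comonoid structure (copy, discard) on every object, compatible with the monoidal
structure, with discarding natural. -/
class MarkovCategory (C : Type u) [Category.{v} C] [MonoidalCategory C]
    [SymmetricCategory C] where
  copy : ∀ X : C, X ⟶ X ⊗ X
  del : ∀ X : C, X ⟶ 𝟙_ C
  copy_del_left : ∀ X : C, copy X ≫ (del X ▷ X) = (λ_ X).inv
  copy_del_right : ∀ X : C, copy X ≫ (X ◁ del X) = (ρ_ X).inv
  copy_assoc : ∀ X : C, copy X ≫ (copy X ▷ X) ≫ (α_ X X X).hom = copy X ≫ (X ◁ copy X)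
  copy_comm : ∀ X : C, copy X ≫ (β_ X X).hom = copy X
  copy_tensor : ∀ X Y : C, copy (X ⊗ Y) = (copy X ⊗ₘ copy Y) ≫ tensorμ X X Y Y
  copy_unit : copy (𝟙_ C) = (λ_ (𝟙_ C)).inv
  del_unit : del (𝟙_ C) = 𝟙 (𝟙_ C)
  del_natural : ∀ {X Y : C} (f : X ⟶ Y), f ≫ del Y = del X

namespace MarkovCategory

variable {C : Type u} [Category.{v} C] [MonoidalCategory C] [SymmetricCategory C]
  [_root_.MarkovCategory C]

/-- `f` and `g` are `p`-almost-surely equal: `(id_X ⊗ f) ∘ ∇_X ∘ p = (id_X ⊗ g) ∘ ∇_X ∘ p`. -/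
def AEEq {X Y : C} (p : 𝟙_ C ⟶ X) (f g : X ⟶ Y) : Prop :=
  p ≫ copy X ≫ (X ◁ f) = p ≫ copy X ≫ (X ◁ g)

/-- `f'` is a Bayesian inverse of `f : X ⟶ Y` at the state `p : I ⟶ X`:
`(f' ⊗ id_Y) ∘ ∇_Y ∘ f ∘ p = (id_X ⊗ f) ∘ ∇_X ∘ p`. -/
def BayesianInverse {X Y : C} (f : X ⟶ Y) (p : 𝟙_ C ⟶ X) (f' : Y ⟶ X) : Prop :=
  p ≫ f ≫ copy Y ≫ (f' ▷ Y) = p ≫ copy X ≫ (X ◁ f)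

/-- `(Xp, i, r)` is a support of the state `p : I ⟶ X`. -/
def IsSupport {X : C} (p : 𝟙_ C ⟶ X) (Xp : C) (i : Xp ⟶ X) (r : X ⟶ Xp) : Prop :=
  i ≫ r = 𝟙 Xp ∧ ∀ (Y : C) (f g : X ⟶ Y), AEEq p f g ↔ i ≫ f = i ≫ g

end MarkovCategory

/-!
Bayesian inverses compose in reverse order, by interchanging the two whiskerings. For uniqueness,
commutativity of copying shows that any two Bayesian inverses of `f ≫ g` at `p` agree almost
surely for the pushforward `p ≫ f ≫ g`;
precomposed with the retraction `r_Z`, the support property turns this into an equality of the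
morphisms out of `Z_{g∘f∘p}`, and the split mono `i_X` can then be cancelled.
-/

namespace MarkovCategory

variable {C : Type*} [Category C] [MonoidalCategory C] [SymmetricCategory C]
  [_root_.MarkovCategory C]

theorem copy_whiskerLeft (X : C) {Y : C} (u : X ⟶ Y) :
    copy X ≫ X ◁ u = copy X ≫ u ▷ X ≫ (β_ Y X).hom := by
  rw [BraidedCategory.braiding_naturality_left, ← Category.assoc, copy_comm]

theorem BayesianInverse.comp {X Y Z : C} {f : X ⟶ Y} {g : Y ⟶ Z} {p : 𝟙_ C ⟶ X}
    {f' : Y ⟶ X} {g' : Z ⟶ Y} (hf : BayesianInverse f p f')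
    (hg : BayesianInverse g (p ≫ f) g') : BayesianInverse (f ≫ g) p (g' ≫ f') := by
  unfold BayesianInverse at hf hg ⊢
  calc p ≫ (f ≫ g) ≫ copy Z ≫ (g' ≫ f') ▷ Z
      = (p ≫ f ≫ g ≫ copy Z ≫ g' ▷ Z) ≫ f' ▷ Z := by simp
    _ = (p ≫ f ≫ copy Y ≫ f' ▷ Y) ≫ X ◁ g := by
        simp only [Category.assoc] at hg ⊢
        rw [reassoc_of% hg, whisker_exchange]
    _ = p ≫ copy X ≫ X ◁ (f ≫ g) := by
        simp only [Category.assoc] at hf ⊢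
        rw [reassoc_of% hf, MonoidalCategory.whiskerLeft_comp]

theorem BayesianInverse.aeEq {X Y : C} {f : X ⟶ Y} {p : 𝟙_ C ⟶ X} {f' f'' : Y ⟶ X}
    (h' : BayesianInverse f p f') (h'' : BayesianInverse f p f'') : AEEq (p ≫ f) f' f'' := by
  have h : p ≫ f ≫ copy Y ≫ f' ▷ Y = p ≫ f ≫ copy Y ≫ f'' ▷ Y := h'.trans h''.symm
  unfold AEEq
  simp only [Category.assoc, copy_whiskerLeft, reassoc_of% h]

theorem IsSupport.eq_of_aeEq_retraction {X Xp Y : C} {p : 𝟙_ C ⟶ X} {i : Xp ⟶ X}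
    {r : X ⟶ Xp} (hs : IsSupport p Xp i r) {a b : Xp ⟶ Y} (h : AEEq p (r ≫ a) (r ≫ b)) :
    a = b := by
  simpa [reassoc_of% hs.1] using (hs.2 Y _ _).1 h

theorem IsSupport.cancel_inclusion {X Xp W : C} {p : 𝟙_ C ⟶ X} {i : Xp ⟶ X} {r : X ⟶ Xp}
    (hs : IsSupport p Xp i r) {a b : W ⟶ Xp} (h : a ≫ i = b ≫ i) : a = b := by
  simpa [hs.1] using h =≫ r

end MarkovCategory

open MarkovCategory in
/-- Strict compositionality of Bayesian inverses with support. -/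
theorem bayesianInverse_with_support_comp {C : Type u} [Category.{v} C] [MonoidalCategory C]
    [SymmetricCategory C] [_root_.MarkovCategory C] {X Y Z : C} (f : X ⟶ Y) (g : Y ⟶ Z)
    (p : 𝟙_ C ⟶ X)
    (Xp : C) (iX : Xp ⟶ X) (rX : X ⟶ Xp) (hXp : IsSupport p Xp iX rX)
    (Yfp : C) (iY : Yfp ⟶ Y) (rY : Y ⟶ Yfp) (hYfp : IsSupport (p ≫ f) Yfp iY rY)
    (Zgfp : C) (iZ : Zgfp ⟶ Z) (rZ : Z ⟶ Zgfp) (hZgfp : IsSupport (p ≫ f ≫ g) Zgfp iZ rZ)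
    (fs : Yfp ⟶ Xp) (hfs : BayesianInverse f p (rY ≫ fs ≫ iX))
    (gs : Zgfp ⟶ Yfp) (hgs : BayesianInverse g (p ≫ f) (rZ ≫ gs ≫ iY)) :
    BayesianInverse (f ≫ g) p (rZ ≫ (gs ≫ fs) ≫ iX) ∧
      ∀ h : Zgfp ⟶ Xp, BayesianInverse (f ≫ g) p (rZ ≫ h ≫ iX) → h = gs ≫ fs := by
  have hcomp : BayesianInverse (f ≫ g) p (rZ ≫ (gs ≫ fs) ≫ iX) := by
    simpa [reassoc_of% hYfp.1] using hfs.comp hgs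
  refine ⟨hcomp, fun h hh => hXp.cancel_inclusion ?_⟩
  exact hZgfp.eq_of_aeEq_retraction (hh.aeEq hcomp)
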